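/- arXiv:2105.02856 — 2 statements merged into one kernel-verified Lean document; each statement's English description precedes it below -/
import Mathlib

section
/- Consider a finite binary tree where each leaf has weight 1 and each internal node has two children. Define the charge of an internal node as the minimum of the number of leaves in its two subtrees. Then the sum of charges over all internal nodes of a tree with n leaves is at most n · log₂ n. -/
/-- A finite binary tree: either a leaf, or an internal node with two children. -/
inductive BTree : Type
  | leaf : BTree
  | node : BTree → BTree → BTree

/-- Number of leaves of a binary tree. -/
def BTree.leaves : BTree → ℕ
  | .leaf => 1
  | .node l r => l.leaves + r.leaves

/-- Total charge: each internal node is charged the minimum of the leaf-counts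
of its two subtrees. -/
def BTree.totalCharge : BTree → ℕ
  | .leaf => 0
  | .node l r => min l.leaves r.leaves + l.totalCharge + r.totalCharge

lemma BTree.leaves_pos (t : BTree) : 1 ≤ t.leaves := by
  induction t with
  | leaf => simp [BTree.leaves]
  | node l r ihl ihr => simp [BTree.leaves]; omega

lemma key (a b : ℝ) (ha : 1 ≤ a) (hb : 1 ≤ b) (hab : a ≤ b) :
    a + a * Real.logb 2 a + b * Real.logb 2 b ≤ (a + b) * Real.logb 2 (a + b) := by
  have ha0 : 0 < a := by linarith
  have hb0 : 0 < b := by linarith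
  have h1 : Real.logb 2 (2 * a) = 1 + Real.logb 2 a := by
    rw [Real.logb_mul (by norm_num) (by positivity), Real.logb_self_eq_one] <;> norm_num
  have h2 : Real.logb 2 (2 * a) ≤ Real.logb 2 (a + b) := by
    apply Real.logb_le_logb_of_le (by norm_num) (by positivity); linarith
  have h3 : a * (1 + Real.logb 2 a) ≤ a * Real.logb 2 (a + b) := by
    apply mul_le_mul_of_nonneg_left _ ha0.le
    rw [← h1]; exact h2
  have h4 : b * Real.logb 2 b ≤ b * Real.logb 2 (a + b) := by
    apply mul_le_mul_of_nonneg_left _ hb0.le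
    apply Real.logb_le_logb_of_le (by norm_num) (by positivity); linarith
  nlinarith [h3, h4]

/-- The sum over all internal nodes of the minimum of the leaf-counts of the two
subtrees is at most `n * log₂ n`, where `n` is the number of leaves. -/
theorem totalCharge_le (t : BTree) :
    (t.totalCharge : ℝ) ≤ (t.leaves : ℝ) * Real.logb 2 (t.leaves : ℝ) := by
  induction t with
  | leaf => simp [BTree.totalCharge, BTree.leaves]
  | node l r ihl ihr =>
    have hl := l.leaves_pos
    have hr := r.leaves_pos
    have hl' : (1 : ℝ) ≤ (l.leaves : ℝ) := by exact_mod_cast hl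
    have hr' : (1 : ℝ) ≤ (r.leaves : ℝ) := by exact_mod_cast hr
    simp only [BTree.totalCharge, BTree.leaves]
    push_cast
    rcases le_total l.leaves r.leaves with h | h
    · have h' : (l.leaves : ℝ) ≤ (r.leaves : ℝ) := by exact_mod_cast h
      have hmin : (min l.leaves r.leaves : ℝ) = (l.leaves : ℝ) := by
        rw [min_eq_left h']
      calc (min l.leaves r.leaves : ℝ) + (l.totalCharge : ℝ) + (r.totalCharge : ℝ)
          ≤ (l.leaves : ℝ) + (l.leaves : ℝ) * Real.logb 2 (l.leaves : ℝ)
            + (r.leaves : ℝ) * Real.logb 2 (r.leaves : ℝ) := by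
            rw [hmin]; linarith
        _ ≤ ((l.leaves : ℝ) + (r.leaves : ℝ)) * Real.logb 2 ((l.leaves : ℝ) + (r.leaves : ℝ)) :=
            key _ _ hl' hr' h'
    · have h' : (r.leaves : ℝ) ≤ (l.leaves : ℝ) := by exact_mod_cast h
      have hmin : (min l.leaves r.leaves : ℝ) = (r.leaves : ℝ) := by
        rw [min_eq_right h']
      calc (min l.leaves r.leaves : ℝ) + (l.totalCharge : ℝ) + (r.totalCharge : ℝ)
          ≤ (r.leaves : ℝ) + (r.leaves : ℝ) * Real.logb 2 (r.leaves : ℝ)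
            + (l.leaves : ℝ) * Real.logb 2 (l.leaves : ℝ) := by
            rw [hmin]; linarith
        _ ≤ ((r.leaves : ℝ) + (l.leaves : ℝ)) * Real.logb 2 ((r.leaves : ℝ) + (l.leaves : ℝ)) :=
            key _ _ hr' hl' h'
        _ = ((l.leaves : ℝ) + (r.leaves : ℝ)) * Real.logb 2 ((l.leaves : ℝ) + (r.leaves : ℝ)) := by
            ring_nf
end

section
/- Let h be defined on a recursive datatype D by h(Con(d₁,...,d_k)) = f(|d|, hash(Con), h(d₁), ..., h(d_k)) where f is a uniformly random function into H = {0,1}^b and |d| is the number of constructor calls in d. Then for all distinct a, b ∈ D with |a|, |b| < 2^b, P(h(a) = h(b)) ≤ (|a| + |b|)/2^b. -/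
open MeasureTheory ProbabilityTheory
open scoped ENNReal

/-- A recursively defined datatype over a signature of constructor symbols `C`,
where constructor `c` has arity `ar c`. -/
inductive RTree (C : Type) (ar : C → ℕ) : Type
  | node : (c : C) → (Fin (ar c) → RTree C ar) → RTree C ar

/-- The size of an element: the number of constructor calls. -/
def RTree.size {C : Type} {ar : C → ℕ} : RTree C ar → ℕ
  | .node c ch => 1 + ∑ i : Fin (ar c), (ch i).size

/-- The compositional hash: `h (Con (d₁, …, d_k)) = f (|d|, hash Con, [h d₁, …, h d_k])`,
where `hashC` hashes constructor symbols and `f` is the hash combiner. -/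
def RTree.hashOf {C : Type} {ar : C → ℕ} {H : Type}
    (hashC : C → H) (f : ℕ → H → List H → H) : RTree C ar → H
  | .node c ch => f (RTree.size (.node c ch)) (hashC c)
      (List.ofFn fun i => (ch i).hashOf hashC f)

/-!
Every hash value is a coordinate of one independent uniform family, indexed by the
constructor symbols and by the argument triples `(n, x, l)` of `f`. The outermost call of `f`
for `a` has size argument `|a|`, while all values its arguments are computed from sit at sizes
below `|a|`; so once those finitely many values are fixed, the outermost call reads a fresh
uniform coordinate. If `|a| ≠ |t|`, the outermost call of the larger tree is fresh and matches
the other hash with probability `2⁻ᵇ`. If `|a| = |t|`, either the two outermost calls have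
different arguments, hence read two distinct fresh coordinates (probability `2⁻ᵇ`), or their
arguments coincide, which forces a collision of the two constructor hashes (probability
`2⁻ᵇ`) or of two distinct children (induction).
-/

open Function Finset

section UniformFamily

variable {Ω I H : Type*} [MeasurableSpace Ω] {μ : Measure Ω}
  [Fintype H] [Nonempty H]

lemma measure_le_inv_card_of_slices (X : I → Ω → H) (J : Finset I) (E : Set Ω)
    (hE : ∀ g : I → H, μ (E ∩ ⋂ j ∈ J, X j ⁻¹' {g j}) ≤ (Fintype.card H : ℝ≥0∞)⁻¹ ^ (#J + 1)) :
    μ E ≤ (Fintype.card H : ℝ≥0∞)⁻¹ := by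
  classical
  set N : ℝ≥0∞ := (Fintype.card H : ℝ≥0∞)
  let extend (v : J → H) (i : I) : H := if hi : i ∈ J then v ⟨i, hi⟩ else Classical.arbitrary H
  have hcover : E ⊆ ⋃ v : J → H, E ∩ ⋂ j ∈ J, X j ⁻¹' {extend v j} := fun ω hω =>
    Set.mem_iUnion.2 ⟨fun j => X j ω, hω, Set.mem_iInter₂.2 fun j hj => by simp [extend, hj]⟩
  have hN : N ^ #J * N⁻¹ ^ (#J + 1) = N⁻¹ := by
    rw [pow_succ, ← mul_assoc, ← mul_pow, ENNReal.mul_inv_cancel (by simp)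
      (ENNReal.natCast_ne_top _), one_pow, one_mul]
  calc μ E ≤ ∑ v : J → H, μ (E ∩ ⋂ j ∈ J, X j ⁻¹' {extend v j}) :=
        (measure_mono hcover).trans (measure_iUnion_fintype_le _ _)
    _ ≤ ∑ _v : J → H, N⁻¹ ^ (#J + 1) := sum_le_sum fun v _ => hE _
    _ = N⁻¹ := by
        rw [sum_const, card_univ, Fintype.card_fun, Fintype.card_coe, nsmul_eq_mul,
          Nat.cast_pow, hN]

variable [MeasurableSpace H] [MeasurableSingletonClass H]

lemma measure_preimage_singleton_of_map_eq_uniform {Y : Ω → H}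
    (hY : μ.map Y = (PMF.uniformOfFintype H).toMeasure) (h : H) :
    μ (Y ⁻¹' {h}) = (Fintype.card H : ℝ≥0∞)⁻¹ := by
  have hYm : AEMeasurable Y μ := aemeasurable_of_map_neZero (by rw [hY]; infer_instance)
  rw [← Measure.map_apply_of_aemeasurable hYm (measurableSet_singleton h), hY,
    PMF.toMeasure_apply_singleton _ _ (measurableSet_singleton h), PMF.uniformOfFintype_apply]

lemma measure_biInter_preimage_singleton {X : I → Ω → H} (hX : iIndepFun X μ)
    (hU : ∀ i, μ.map (X i) = (PMF.uniformOfFintype H).toMeasure) (s : Finset I) (w : I → H) :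
    μ (⋂ i ∈ s, X i ⁻¹' {w i}) = (Fintype.card H : ℝ≥0∞)⁻¹ ^ #s := by
  rw [hX.measure_inter_preimage_eq_mul s fun i _ => measurableSet_singleton (w i),
    prod_congr rfl fun i _ => measure_preimage_singleton_of_map_eq_uniform (hU i) (w i),
    prod_const]

variable {X : I → Ω → H}

/-- On each slice `X|_J = g|_J` the index `p` is fixed outside `J`, so `X (p g)` is uniform and
independent of the target. -/
lemma measure_fresh_eq_le (hX : iIndepFun X μ)
    (hU : ∀ i, μ.map (X i) = (PMF.uniformOfFintype H).toMeasure) (J : Finset I)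
    {p : (I → H) → I} {T : (I → H) → H} (hp : DependsOn p J) (hT : DependsOn T J)
    (hpJ : ∀ g, p g ∉ J) :
    μ {ω | X (p (X · ω)) ω = T (X · ω)} ≤ (Fintype.card H : ℝ≥0∞)⁻¹ := by
  classical
  refine measure_le_inv_card_of_slices X J _ fun g => ?_
  calc _ ≤ μ (⋂ i ∈ insert (p g) J, X i ⁻¹' {update g (p g) (T g) i}) := by
        refine measure_mono ?_
        rintro ω ⟨hω, hωJ⟩
        simp only [Set.mem_ofPred_eq, Set.mem_iInter₂, Set.mem_preimage,
          Set.mem_singleton_iff] at hω hωJ ⊢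
        rw [hp hωJ, hT hωJ] at hω
        intro i hi
        rcases mem_insert.1 hi with rfl | hi
        · simpa using hω
        · rw [update_of_ne (ne_of_mem_of_not_mem hi (hpJ g))]
          exact hωJ i hi
    _ = _ := by rw [measure_biInter_preimage_singleton hX hU, card_insert_of_notMem (hpJ g)]

lemma measure_fresh_eq_fresh_le (hX : iIndepFun X μ)
    (hU : ∀ i, μ.map (X i) = (PMF.uniformOfFintype H).toMeasure) (J : Finset I)
    {S : (I → H) → Prop} {p q : (I → H) → I} (hS : DependsOn S J) (hp : DependsOn p J)
    (hq : DependsOn q J) (hpJ : ∀ g, S g → p g ∉ J) (hqJ : ∀ g, S g → q g ∉ J)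
    (hpq : ∀ g, S g → p g ≠ q g) :
    μ {ω | S (X · ω) ∧ X (p (X · ω)) ω = X (q (X · ω)) ω} ≤ (Fintype.card H : ℝ≥0∞)⁻¹ := by
  classical
  refine measure_le_inv_card_of_slices X J _ fun g => ?_
  by_cases hSg : S g
  swap
  · refine (measure_mono_null ?_ measure_empty).trans_le zero_le
    rintro ω ⟨hω, hωJ⟩
    simp only [Set.mem_ofPred_eq, Set.mem_iInter₂, Set.mem_preimage,
      Set.mem_singleton_iff] at hω hωJ
    exact hSg (hS hωJ ▸ hω.1)
  have hcard : #(insert (p g) (insert (q g) J)) = #J + 1 + 1 := by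
    rw [card_insert_of_notMem, card_insert_of_notMem (hqJ g hSg)]
    simpa using ⟨hpq g hSg, hpJ g hSg⟩
  set N : ℝ≥0∞ := (Fintype.card H : ℝ≥0∞)
  calc _ ≤ ∑ h : H, μ (⋂ i ∈ insert (p g) (insert (q g) J),
          X i ⁻¹' {update (update g (p g) h) (q g) h i}) := by
        refine (measure_mono ?_).trans (measure_iUnion_fintype_le _ _)
        rintro ω ⟨hω, hωJ⟩
        simp only [Set.mem_ofPred_eq, Set.mem_iInter₂, Set.mem_preimage,
          Set.mem_singleton_iff] at hω hωJ
        rw [hp hωJ, hq hωJ] at hω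
        simp only [Set.mem_iUnion, Set.mem_iInter₂, Set.mem_preimage, Set.mem_singleton_iff]
        refine ⟨X (p g) ω, fun i hi => ?_⟩
        rcases mem_insert.1 hi with rfl | hi
        · simp [update_of_ne (hpq g hSg)]
        rcases mem_insert.1 hi with rfl | hi
        · simp [hω.2]
        · rw [update_of_ne (ne_of_mem_of_not_mem hi (hqJ g hSg)),
            update_of_ne (ne_of_mem_of_not_mem hi (hpJ g hSg))]
          exact hωJ i hi
    _ = N * N⁻¹ * N⁻¹ ^ (#J + 1) := by
        rw [sum_congr rfl fun h _ => measure_biInter_preimage_singleton hX hU _ _, hcard, sum_const,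
          card_univ, nsmul_eq_mul, pow_succ' _ (#J + 1), mul_assoc]
    _ = N⁻¹ ^ (#J + 1) := by
        rw [ENNReal.mul_inv_cancel (by simp) (ENNReal.natCast_ne_top _), one_mul]

lemma measure_eq_le_of_ne (hX : iIndepFun X μ)
    (hU : ∀ i, μ.map (X i) = (PMF.uniformOfFintype H).toMeasure) {i j : I} (hij : i ≠ j) :
    μ {ω | X i ω = X j ω} ≤ (Fintype.card H : ℝ≥0∞)⁻¹ := by
  classical
  simpa using measure_fresh_eq_fresh_le hX hU ∅ (S := fun _ => True) (p := fun _ => i)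
    (q := fun _ => j) (by simp [DependsOn]) (by simp [DependsOn]) (by simp [DependsOn])
    (by simp) (by simp) fun _ _ => hij

end UniformFamily

namespace RTree

variable {C : Type} {ar : C → ℕ} {H : Type}

lemma size_lt_size_node (c : C) (ch : Fin (ar c) → RTree C ar) (i : Fin (ar c)) :
    (ch i).size < (node c ch).size := by
  have := single_le_sum (fun j _ => Nat.zero_le (ch j).size) (mem_univ i)
  rw [size]
  omega

lemma one_le_size (d : RTree C ar) : 1 ≤ d.size := by
  cases d
  simp [size]

/-- The random values a hash draws on: `.inl c` is the hash of the constructor `c`, and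
`.inr (n, x, l)` is the value of the combiner `f n x l`. -/
abbrev HashIndex (C H : Type) := C ⊕ (ℕ × H × List H)

/-- The `size` argument of a call of the combiner; constructor hashes sit at `0`. -/
def callSize : HashIndex C H → ℕ := Sum.elim (fun _ => 0) Prod.fst

def hashBy (g : HashIndex C H → H) (d : RTree C ar) : H :=
  d.hashOf (g ∘ .inl) fun n x l => g (.inr (n, x, l))

def topArgs (g : HashIndex C H → H) : RTree C ar → H × List H
  | .node c ch => (g (.inl c), List.ofFn fun i => hashBy g (ch i))

def topIndex (g : HashIndex C H → H) (d : RTree C ar) : HashIndex C H :=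
  .inr (d.size, topArgs g d)

lemma hashBy_eq_apply_topIndex (g : HashIndex C H → H) (d : RTree C ar) :
    hashBy g d = g (topIndex g d) := by
  cases d
  rfl

lemma hashBy_eq_of_topArgs_eq {g : HashIndex C H → H} {c : C} {ch ch' : Fin (ar c) → RTree C ar}
    (h : topArgs g (node c ch) = topArgs g (node c ch')) (i : Fin (ar c)) :
    hashBy g (ch i) = hashBy g (ch' i) := by
  simp only [topArgs, Prod.mk.injEq, List.ofFn_inj] at h
  exact congrFun h.2 i

section Support

variable [Fintype H] [DecidableEq C] [DecidableEq H]

/-- Every index the outermost combiner call of `d` can read, whatever the random values. -/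
def topRange : RTree C ar → Finset (HashIndex C H)
  | d@(.node c _) => univ.image fun x : H × (Fin (ar c) → H) => .inr (d.size, x.1, List.ofFn x.2)

def argSupport : RTree C ar → Finset (HashIndex C H)
  | .node c ch => insert (.inl c) (univ.biUnion fun i => argSupport (ch i) ∪ topRange (ch i))

lemma topIndex_mem_topRange (g : HashIndex C H → H) (d : RTree C ar) :
    topIndex g d ∈ topRange d := by
  obtain ⟨c, ch⟩ := d
  simp only [topRange, topIndex, topArgs, mem_image, mem_univ, true_and]
  exact ⟨(g (.inl c), fun i => hashBy g (ch i)), rfl⟩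

lemma callSize_of_mem_topRange {d : RTree C ar} {i : HashIndex C H} (hi : i ∈ topRange d) :
    callSize i = d.size := by
  obtain ⟨c, ch⟩ := d
  simp only [topRange, mem_image] at hi
  obtain ⟨x, -, rfl⟩ := hi
  rfl

lemma callSize_lt_of_mem_argSupport {d : RTree C ar} {i : HashIndex C H}
    (hi : i ∈ argSupport d) : callSize i < d.size := by
  induction d with
  | node c ch ih =>
    simp only [argSupport, mem_insert, mem_biUnion, mem_univ, true_and, mem_union] at hi
    rcases hi with rfl | ⟨j, hj | hj⟩
    · simp [callSize, size]
    · exact (ih j hj).trans (size_lt_size_node c ch j)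
    · exact (callSize_of_mem_topRange hj).trans_lt (size_lt_size_node c ch j)

lemma topIndex_notMem_argSupport {d d' : RTree C ar} (h : d'.size ≤ d.size)
    (g : HashIndex C H → H) : topIndex g d ∉ argSupport d' := fun hi =>
  (callSize_lt_of_mem_argSupport hi).not_ge h

lemma dependsOn_hashBy_of_topArgs {d : RTree C ar} {s : Set (HashIndex C H)}
    (h : DependsOn (topArgs · d) s) : DependsOn (hashBy · d) (s ∪ ↑(topRange (H := H) d)) := by
  intro g g' hgg'
  have hargs : topArgs g d = topArgs g' d := h fun i hi => hgg' i (Or.inl hi)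
  dsimp only
  rw [hashBy_eq_apply_topIndex, hashBy_eq_apply_topIndex, topIndex, hargs]
  exact hgg' _ (Or.inr (topIndex_mem_topRange g' d))

lemma dependsOn_topArgs (d : RTree C ar) :
    DependsOn (fun g : HashIndex C H → H => topArgs g d)
      ↑(argSupport d : Finset (HashIndex C H)) := by
  induction d with
  | node c ch ih =>
    intro g g' hgg'
    have hc : g (.inl c) = g' (.inl c) := hgg' _ (by simp [argSupport])
    have hch (i : Fin (ar c)) : hashBy g (ch i) = hashBy g' (ch i) :=
      dependsOn_hashBy_of_topArgs (ih i) fun j hj => hgg' j <| by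
        simp only [argSupport, coe_insert, coe_biUnion, coe_union]
        exact Or.inr (Set.mem_iUnion₂.2 ⟨i, mem_coe.2 (mem_univ i), hj⟩)
    simp only [topArgs, hc, hch]

lemma dependsOn_topIndex (d : RTree C ar) :
    DependsOn (fun g : HashIndex C H → H => topIndex g d)
      ↑(argSupport d : Finset (HashIndex C H)) :=
  fun _ _ h => congrArg (fun x => Sum.inr (d.size, x)) (dependsOn_topArgs d h)

lemma dependsOn_hashBy (d : RTree C ar) :
    DependsOn (fun g : HashIndex C H → H => hashBy g d)
      ↑(argSupport d ∪ topRange d : Finset (HashIndex C H)) := by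
  simpa using dependsOn_hashBy_of_topArgs (dependsOn_topArgs d)

end Support

section Collision

variable {Ω : Type*} [MeasurableSpace Ω] {μ : Measure Ω}
  [Fintype H] [Nonempty H] [MeasurableSpace H] [MeasurableSingletonClass H]
  {X : HashIndex C H → Ω → H}

lemma measure_hashBy_eq_le_of_size_lt (hX : iIndepFun X μ)
    (hU : ∀ i, μ.map (X i) = (PMF.uniformOfFintype H).toMeasure) {a t : RTree C ar}
    (h : t.size < a.size) :
    μ {ω | hashBy (X · ω) a = hashBy (X · ω) t} ≤ (Fintype.card H : ℝ≥0∞)⁻¹ := by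
  classical
  simp only [hashBy_eq_apply_topIndex _ a]
  refine measure_fresh_eq_le hX hU (argSupport a ∪ (argSupport t ∪ topRange t))
    ((dependsOn_topIndex a).mono (coe_subset.2 subset_union_left))
    ((dependsOn_hashBy t).mono (coe_subset.2 subset_union_right)) fun g => ?_
  simp only [mem_union, not_or]
  exact ⟨topIndex_notMem_argSupport le_rfl g, topIndex_notMem_argSupport h.le g,
    fun hi => h.ne' (callSize_of_mem_topRange hi)⟩

lemma measure_hashBy_eq_le_of_size_eq (hX : iIndepFun X μ)
    (hU : ∀ i, μ.map (X i) = (PMF.uniformOfFintype H).toMeasure) {a t : RTree C ar}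
    (h : a.size = t.size) :
    μ {ω | hashBy (X · ω) a = hashBy (X · ω) t} ≤
      μ {ω | topArgs (X · ω) a = topArgs (X · ω) t} + (Fintype.card H : ℝ≥0∞)⁻¹ := by
  classical
  set J : Finset (HashIndex C H) := argSupport a ∪ argSupport t
  have hJa : DependsOn (fun g : HashIndex C H → H => topArgs g a) ↑J :=
    (dependsOn_topArgs a).mono (coe_subset.2 subset_union_left)
  have hJt : DependsOn (fun g : HashIndex C H → H => topArgs g t) ↑J :=
    (dependsOn_topArgs t).mono (coe_subset.2 subset_union_right)
  have hfresh (g : HashIndex C H → H) : topIndex g a ∉ J ∧ topIndex g t ∉ J := by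
    simp only [J, mem_union, not_or]
    exact ⟨⟨topIndex_notMem_argSupport le_rfl g, topIndex_notMem_argSupport h.ge g⟩,
      topIndex_notMem_argSupport h.le g, topIndex_notMem_argSupport le_rfl g⟩
  have hcollide := measure_fresh_eq_fresh_le hX hU J (S := fun g => topArgs g a ≠ topArgs g t)
    (fun g g' hgg' => by
      show (topArgs g a ≠ topArgs g t) = (topArgs g' a ≠ topArgs g' t)
      rw [show topArgs g a = topArgs g' a from hJa hgg',
        show topArgs g t = topArgs g' t from hJt hgg'])
    ((dependsOn_topIndex a).mono (coe_subset.2 subset_union_left))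
    ((dependsOn_topIndex t).mono (coe_subset.2 subset_union_right))
    (fun g _ => (hfresh g).1) (fun g _ => (hfresh g).2)
    fun g hS heq => hS (congrArg Prod.snd (Sum.inr_injective heq))
  refine (measure_mono fun ω hω => ?_).trans
    ((measure_union_le _ _).trans (add_le_add le_rfl hcollide))
  by_cases hargs : topArgs (X · ω) a = topArgs (X · ω) t
  · exact Or.inl hargs
  · refine Or.inr ⟨hargs, ?_⟩
    rwa [Set.mem_ofPred_eq, hashBy_eq_apply_topIndex, hashBy_eq_apply_topIndex] at hω

lemma measure_topArgs_eq_le_of_ne (hX : iIndepFun X μ)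
    (hU : ∀ i, μ.map (X i) = (PMF.uniformOfFintype H).toMeasure) {c c' : C} (hc : c ≠ c')
    (ch : Fin (ar c) → RTree C ar) (ch' : Fin (ar c') → RTree C ar) :
    μ {ω | topArgs (X · ω) (node c ch) = topArgs (X · ω) (node c' ch')} ≤
      (Fintype.card H : ℝ≥0∞)⁻¹ :=
  (measure_mono fun _ h => congrArg Prod.fst h).trans
    (measure_eq_le_of_ne hX hU (Sum.inl_injective.ne hc))

theorem measure_hashBy_eq_le (hX : iIndepFun X μ)
    (hU : ∀ i, μ.map (X i) = (PMF.uniformOfFintype H).toMeasure) {a t : RTree C ar}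
    (hne : a ≠ t) :
    μ {ω | hashBy (X · ω) a = hashBy (X · ω) t} ≤ (a.size + t.size) / Fintype.card H := by
  set N : ℝ≥0∞ := (Fintype.card H : ℝ≥0∞)
  induction a generalizing t with
  | node c ch ih =>
    have hinv : N⁻¹ ≤ ((node c ch).size + t.size) / N := by
      rw [← one_div]
      refine ENNReal.div_le_div_right ?_ N
      exact_mod_cast (one_le_size _).trans (Nat.le_add_right _ _)
    rcases lt_trichotomy (node c ch).size t.size with hlt | heq | hgt
    · calc _ = μ {ω | hashBy (X · ω) t = hashBy (X · ω) (node c ch)} := by simp only [eq_comm]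
        _ ≤ _ := (measure_hashBy_eq_le_of_size_lt hX hU hlt).trans hinv
    · refine (measure_hashBy_eq_le_of_size_eq hX hU heq).trans ?_
      obtain ⟨c', ch'⟩ := t
      by_cases hc : c = c'
      · subst hc
        obtain ⟨i, hi⟩ : ∃ i, ch i ≠ ch' i := by
          by_contra! h
          exact hne (congrArg _ (funext h))
        calc _ ≤ ((ch i).size + (ch' i).size) / N + 1 / N := add_le_add
              ((measure_mono fun _ h => hashBy_eq_of_topArgs_eq h i).trans (ih i hi)) (one_div N).ge
          _ = ((ch i).size + (ch' i).size + 1) / N := ENNReal.div_add_div_same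
          _ ≤ _ := by
              refine ENNReal.div_le_div_right ?_ N
              have := size_lt_size_node c ch i
              have := size_lt_size_node c ch' i
              exact_mod_cast (by omega : (ch i).size + (ch' i).size + 1 ≤ _)
      · calc _ ≤ N⁻¹ + N⁻¹ := add_le_add (measure_topArgs_eq_le_of_ne hX hU hc ch ch') le_rfl
          _ = 2 / N := by rw [← one_div, ENNReal.div_add_div_same, one_add_one_eq_two]
          _ ≤ _ := by
              refine ENNReal.div_le_div_right ?_ N
              have := one_le_size (node c ch)
              exact_mod_cast (by omega : 2 ≤ (node c ch).size + (node c' ch').size)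
    · exact (measure_hashBy_eq_le_of_size_lt hX hU hgt).trans hinv

end Collision

end RTree

theorem random_recursive_hash_collision_bound_general
    {C : Type} (ar : C → ℕ) (b : ℕ)
    {Ω : Type} [MeasurableSpace Ω] (μ : Measure Ω)
    (hashC : Ω → C → (Fin b → Bool)) (f : Ω → ℕ → (Fin b → Bool) → List (Fin b → Bool) → (Fin b → Bool))
    -- the family of all hash values used (indexed by constructor symbols on the left and
    -- by argument tuples of `f` on the right) is jointly independent …
    (hIndep : iIndepFun
      (fun (i : C ⊕ (ℕ × (Fin b → Bool) × List (Fin b → Bool))) (ω : Ω) =>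
        Sum.elim (hashC ω) (fun p => f ω p.1 p.2.1 p.2.2) i) μ)
    -- … and each value is uniform on `H = {0,1}^b`:
    (hUnif : ∀ i : C ⊕ (ℕ × (Fin b → Bool) × List (Fin b → Bool)),
      μ.map (fun ω => Sum.elim (hashC ω) (fun p => f ω p.1 p.2.1 p.2.2) i) =
        (PMF.uniformOfFintype (Fin b → Bool)).toMeasure)
    (a t : RTree C ar) (hne : a ≠ t) :
    μ {ω | a.hashOf (hashC ω) (f ω) = t.hashOf (hashC ω) (f ω)} ≤
      ((a.size : ℝ≥0∞) + (t.size : ℝ≥0∞)) / 2 ^ b := by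
  have hcard : (Fintype.card (Fin b → Bool) : ℝ≥0∞) = 2 ^ b := by simp
  rw [← hcard]
  exact RTree.measure_hashBy_eq_le hIndep hUnif hne

/-- If the constructor hashes and the combiner `f` are a jointly independent family of
uniformly random values in `H = {0,1}^b` (one independent uniform value per constructor
symbol and per argument tuple of `f`), then for any distinct `a b : D` with sizes below
`2^b`, the probability of a hash collision is at most `(|a| + |b|) / 2^b`. -/
theorem random_recursive_hash_collision_bound
    {C : Type} [MeasurableSpace C] (ar : C → ℕ) (b : ℕ)
    {Ω : Type} [MeasurableSpace Ω] (μ : Measure Ω) [IsProbabilityMeasure μ]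
    (hashC : Ω → C → (Fin b → Bool)) (f : Ω → ℕ → (Fin b → Bool) → List (Fin b → Bool) → (Fin b → Bool))
    -- the family of all hash values used (indexed by constructor symbols on the left and
    -- by argument tuples of `f` on the right) is jointly independent …
    (hIndep : iIndepFun
      (fun (i : C ⊕ (ℕ × (Fin b → Bool) × List (Fin b → Bool))) (ω : Ω) =>
        Sum.elim (hashC ω) (fun p => f ω p.1 p.2.1 p.2.2) i) μ)
    -- … and each value is uniform on `H = {0,1}^b`:
    (hUnif : ∀ i : C ⊕ (ℕ × (Fin b → Bool) × List (Fin b → Bool)),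
      μ.map (fun ω => Sum.elim (hashC ω) (fun p => f ω p.1 p.2.1 p.2.2) i) =
        (PMF.uniformOfFintype (Fin b → Bool)).toMeasure)
    (a t : RTree C ar) (hne : a ≠ t)
    (ha : a.size < 2 ^ b) (ht : t.size < 2 ^ b) :
    μ {ω | a.hashOf (hashC ω) (f ω) = t.hashOf (hashC ω) (f ω)} ≤
      ((a.size : ℝ≥0∞) + (t.size : ℝ≥0∞)) / 2 ^ b :=
  random_recursive_hash_collision_bound_general ar b μ hashC f hIndep hUnif a t hne
end
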